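/- arXiv:2104.00392 — 2 statements merged into one kernel-verified Lean document; each statement's English description precedes it below -/
import Mathlib

section
/- Let π, G : [0,1] → ℝ be C¹ with π(x) > 0 on [0,1], and let p(t) solve dp/dt = p(1-p)π(p) with p(0) = x ∈ (0,1), together with q(t) solving dq/dt = λG(p(t))q, q(0) = 1. Then q(t) = e^{λG(1)t} · exp(-λ ∫_x^{p(t)} R(s)/(s π(s)) ds), where R(s) = (G(1) - G(s))/(1-s). -/
open Set Real

/-- If `p` solves the autonomous ODE `p' = v (p)` with `v` of class `C¹`, and `p`
hits an equilibrium `c` of `v` at some time `t₁ ≥ 0`, then `p 0 = c`. -/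
lemma eq_at_zero_of_hits_equilibrium (v : ℝ → ℝ) (hv : ContDiff ℝ 1 v)
    (p : ℝ → ℝ) (hp : ∀ t, HasDerivAt p (v (p t)) t)
    (c : ℝ) (hc : v c = 0) (t₁ : ℝ) (ht₁ : 0 ≤ t₁) (hpt₁ : p t₁ = c) : p 0 = c := by
  have hpcont : Continuous p := continuous_iff_continuousAt.2 fun t => (hp t).continuousAt
  -- bound the trajectory
  obtain ⟨C, hC⟩ := isCompact_Icc.exists_bound_of_continuousOn
    (hpcont.continuousOn : ContinuousOn p (Icc 0 t₁))
  set M : ℝ := max C |c| with hM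
  set S : Set ℝ := Icc (-M) M with hS
  have hpS : ∀ t ∈ Icc (0:ℝ) t₁, p t ∈ S := by
    intro t ht
    have := hC t ht
    rw [Real.norm_eq_abs, abs_le] at this
    constructor
    · linarith [neg_le_neg (le_max_left C |c|)]
    · exact this.2.trans (le_max_left C |c|)
  have hcS : c ∈ S := by
    constructor
    · have := neg_abs_le c
      have h2 : -M ≤ -|c| := neg_le_neg (le_max_right C |c|)
      linarith
    · exact (le_abs_self c).trans (le_max_right C |c|)
  -- Lipschitz bound
  have hdvcont : Continuous (deriv v) := (hv.iterate_deriv' 0 1).continuous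
  obtain ⟨K, hK⟩ := isCompact_Icc.exists_bound_of_continuousOn
    (hdvcont.continuousOn : ContinuousOn (deriv v) S)
  have hlip : LipschitzOnWith K.toNNReal v S := by
    apply (convex_Icc _ _).lipschitzOnWith_of_nnnorm_deriv_le
      (fun y _ => (hv.differentiable one_ne_zero) y)
    intro y hy
    rw [← NNReal.coe_le_coe, coe_nnnorm, Real.coe_toNNReal']
    exact (hK y hy).trans (le_max_left _ _)
  have huniq := ODE_solution_unique_of_mem_Icc_left
    (v := fun _ y => v y) (s := fun _ => S) (K := K.toNNReal) (f := p) (g := fun _ => c)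
    (a := 0) (b := t₁)
    (fun _ _ => hlip)
    hpcont.continuousOn
    (fun t _ => (hp t).hasDerivWithinAt)
    (fun t ht => hpS t (Ioc_subset_Icc_self ht))
    continuousOn_const
    (fun t _ => by simpa [hc] using (hasDerivWithinAt_const t (Iic t) c))
    (fun _ _ => hcS)
    (by simpa using hpt₁)
  simpa using huniq (by exact ⟨le_rfl, ht₁⟩ : (0:ℝ) ∈ Icc 0 t₁)

/-- Lemma 3.2: with dp/dt = p(1-p)piF(p), p(0) = x ∈ (0,1), and
dq/dt = λG(p)q, q(0) = 1, we have
q(t) = e^{λG(1)t} exp(-λ∫_x^{p(t)} R(s)/(s piF(s)) ds), R(s) = (G(1)-G(s))/(1-s). -/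
theorem solution_along_characteristics (piF G : ℝ → ℝ)
    (hpi : ContDiff ℝ 1 piF) (hG : ContDiff ℝ 1 G)
    (hpos : ∀ s ∈ Set.Icc (0:ℝ) 1, 0 < piF s)
    (lam x : ℝ) (hx : x ∈ Set.Ioo (0:ℝ) 1)
    (p q : ℝ → ℝ) (hp0 : p 0 = x) (hq0 : q 0 = 1)
    (hp : ∀ t : ℝ, HasDerivAt p (p t * (1 - p t) * piF (p t)) t)
    (hq : ∀ t : ℝ, HasDerivAt q (lam * G (p t) * q t) t) :
    ∀ t ≥ (0:ℝ),
      q t = Real.exp (lam * G 1 * t) *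
        Real.exp (-(lam * ∫ s in x..(p t), ((G 1 - G s) / (1 - s)) / (s * piF s))) := by
  have hpcont : Continuous p := continuous_iff_continuousAt.2 fun t => (hp t).continuousAt
  set v : ℝ → ℝ := fun y => y * (1 - y) * piF y with hv
  have hvC : ContDiff ℝ 1 v := by
    apply ContDiff.mul
    · exact (contDiff_id.mul (contDiff_const.sub contDiff_id))
    · exact hpi
  -- the trajectory stays in (0,1)
  have key : ∀ t, 0 ≤ t → p t ∈ Ioo (0:ℝ) 1 := by
    intro t₀ ht₀
    by_contra hcon
    rw [mem_Ioo] at hcon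
    push_neg at hcon
    rcases le_or_gt (p t₀) 0 with h0 | h0
    · -- p hits 0
      have : (0:ℝ) ∈ Icc (p t₀) (p 0) := ⟨h0, by rw [hp0]; exact hx.1.le⟩
      obtain ⟨t₁, ht₁, hpt₁⟩ := intermediate_value_Icc' ht₀ hpcont.continuousOn this
      have := eq_at_zero_of_hits_equilibrium v hvC p hp 0 (by simp [hv]) t₁ ht₁.1 hpt₁
      rw [hp0] at this
      exact absurd this (ne_of_gt hx.1)
    · -- p hits 1
      have h1 : 1 ≤ p t₀ := hcon h0
      have : (1:ℝ) ∈ Icc (p 0) (p t₀) := ⟨by rw [hp0]; exact hx.2.le, h1⟩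
      obtain ⟨t₁, ht₁, hpt₁⟩ := intermediate_value_Icc ht₀ hpcont.continuousOn this
      have := eq_at_zero_of_hits_equilibrium v hvC p hp 1 (by simp [hv]) t₁ ht₁.1 hpt₁
      rw [hp0] at this
      exact absurd this (ne_of_lt hx.2)
  -- the integrand
  set f : ℝ → ℝ := fun s => ((G 1 - G s) / (1 - s)) / (s * piF s) with hf
  have hfcont : ContinuousOn f (Ioo 0 1) := by
    apply ContinuousOn.div
    · apply ContinuousOn.div
      · exact (continuous_const.sub hG.continuous).continuousOn
      · exact (continuous_const.sub continuous_id).continuousOn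
      · intro s hs; exact sub_ne_zero.2 (ne_of_lt hs.2).symm
    · exact (continuous_id.mul hpi.continuous).continuousOn
    · intro s hs
      exact mul_ne_zero (ne_of_gt hs.1) (ne_of_gt (hpos s (Ioo_subset_Icc_self hs)))
  -- derivative of the integral along the characteristic, for t ≥ 0
  have hIderiv : ∀ t, 0 ≤ t →
      HasDerivAt (fun τ => ∫ s in x..(p τ), f s) (G 1 - G (p t)) t := by
    intro t ht
    have hpt := key t ht
    have hsub : uIcc x (p t) ⊆ Ioo (0:ℝ) 1 :=
      Set.ordConnected_Ioo.uIcc_subset hx hpt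
    have hint : IntervalIntegrable f MeasureTheory.volume x (p t) :=
      (hfcont.mono hsub).intervalIntegrable
    have hmeas : StronglyMeasurableAtFilter f (nhds (p t)) :=
      hfcont.stronglyMeasurableAtFilter isOpen_Ioo _ hpt
    have hctf : ContinuousAt f (p t) :=
      hfcont.continuousAt (isOpen_Ioo.mem_nhds hpt)
    have hFTC : HasDerivAt (fun y => ∫ s in x..y, f s) (f (p t)) (p t) :=
      intervalIntegral.integral_hasDerivAt_right hint hmeas hctf
    have hchain := hFTC.comp t (hp t)
    have heq : f (p t) * (p t * (1 - p t) * piF (p t)) = G 1 - G (p t) := by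
      have h1 : p t ≠ 0 := ne_of_gt hpt.1
      have h2 : (1 : ℝ) - p t ≠ 0 := sub_ne_zero.2 (ne_of_lt hpt.2).symm
      have h3 : piF (p t) ≠ 0 := ne_of_gt (hpos _ (Ioo_subset_Icc_self hpt))
      show (G 1 - G (p t)) / (1 - p t) / (p t * piF (p t)) * (p t * (1 - p t) * piF (p t))
          = G 1 - G (p t)
      rw [div_div, div_mul_eq_mul_div, div_eq_iff (by positivity)]
      ring
    rw [heq] at hchain
    exact hchain
  -- the exponent
  set g : ℝ → ℝ := fun τ => lam * G 1 * τ - lam * ∫ s in x..(p τ), f s with hg'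
  have hgderiv : ∀ t, 0 ≤ t → HasDerivAt g (lam * G (p t)) t := by
    intro t ht
    have h1 : HasDerivAt (fun τ : ℝ => lam * G 1 * τ) (lam * G 1) t := by
      simpa using (hasDerivAt_id t).const_mul (lam * G 1)
    have h2 := (hIderiv t ht).const_mul lam
    have := h1.sub h2
    exact this.congr_deriv (by ring)
  -- the quotient is constant
  intro t ht
  set φ : ℝ → ℝ := fun τ => q τ * Real.exp (-(g τ)) with hφ
  have hφderiv : ∀ τ, 0 ≤ τ → HasDerivAt φ 0 τ := by
    intro τ hτ
    have hexp : HasDerivAt (fun σ => Real.exp (-(g σ)))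
        (Real.exp (-(g τ)) * -(lam * G (p τ))) τ := by
      have := ((hgderiv τ hτ).neg).exp
      exact this
    have := (hq τ).mul hexp
    exact this.congr_deriv (by ring)
  have hcst := constant_of_has_deriv_right_zero
    (f := φ) (a := 0) (b := t)
    (fun τ hτ => (hφderiv τ hτ.1).continuousAt.continuousWithinAt)
    (fun τ hτ => (hφderiv τ hτ.1).hasDerivWithinAt)
  have hφt : φ t = φ 0 := hcst t ⟨ht, le_rfl⟩
  have hφ0 : φ 0 = 1 := by
    simp [hφ, hg', hq0, hp0]
  have hqt : q t * Real.exp (-(g t)) = 1 := by rw [← hφ0]; exact hφt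
  have hexp_pos : Real.exp (-(g t)) ≠ 0 := Real.exp_ne_zero _
  have : q t = Real.exp (g t) := by
    have := congrArg (· * Real.exp (g t)) hqt
    simpa [mul_assoc, ← Real.exp_add] using this
  rw [this]
  simp only [hg']
  rw [sub_eq_add_neg, Real.exp_add]
end

section
/- Let G : [0,1] → ℝ be C¹ with G(0) < G(1), let π : [0,1] → ℝ be C¹ with π > 0, and let φ_t, ψ_t denote the flow and growth factor defined by dx/dt = -x(1-x)π(x), dq/dt = λG(x(t))q with q(0) = 1, for λ > 0. Then there exist constants 0 < M̲ and M̄ < ∞ such that for all x ∈ (0,1) and t ≥ 0: M̲ · e^{λG(1)t} · φ_t(x)^{λ(G(1)-G(0))/π(0)} ≤ ψ_t(x) ≤ M̄ · e^{λG(1)t}. -/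
open Set Real intervalIntegral

lemma aux_stays_in_Ioo (piF : ℝ → ℝ) (hpi : ContDiff ℝ 1 piF) (u : ℝ → ℝ)
    (hu0 : u 0 ∈ Set.Ioo (0:ℝ) 1)
    (hu : ∀ t : ℝ, HasDerivAt u (-(u t * (1 - u t) * piF (u t))) t) :
    ∀ t, 0 ≤ t → u t ∈ Set.Ioo (0:ℝ) 1 := by
  by_contra h
  push_neg at h
  obtain ⟨T₀, hT₀, hT₀'⟩ := h
  set v : ℝ → ℝ := fun q => -(q * (1 - q) * piF q) with hv
  have hvC : ContDiff ℝ 1 v :=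
    ((contDiff_id.mul (contDiff_const.sub contDiff_id)).mul hpi).neg
  have hucont : Continuous u := by
    refine continuous_iff_continuousAt.mpr fun s => (hu s).continuousAt
  set S : Set ℝ := {t | 0 ≤ t ∧ u t ∉ Set.Ioo (0:ℝ) 1} with hS
  have hSne : S.Nonempty := ⟨T₀, hT₀, hT₀'⟩
  have hSclosed : IsClosed S := by
    have : S = Ici 0 ∩ u ⁻¹' (Set.Ioo (0:ℝ) 1)ᶜ := by
      ext t
      exact ⟨fun h => ⟨h.1, h.2⟩, fun h => ⟨h.1, h.2⟩⟩
    rw [this]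
    exact isClosed_Ici.inter (isOpen_Ioo.isClosed_compl.preimage hucont)
  have hSbdd : BddBelow S := ⟨0, fun t ht => ht.1⟩
  set T := sInf S with hT
  have hTS : T ∈ S := hSclosed.csInf_mem hSne hSbdd
  have hT0 : 0 < T := by
    rcases lt_or_eq_of_le hTS.1 with h | h
    · exact h
    · exact absurd (h ▸ hu0) hTS.2
  have hpre : ∀ s, 0 ≤ s → s < T → u s ∈ Set.Ioo (0:ℝ) 1 := by
    intro s h0 hsT
    by_contra hc
    exact absurd (csInf_le hSbdd ⟨h0, hc⟩) (not_le.mpr hsT)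
  have hmem : u T ∈ Icc (0:ℝ) 1 := by
    have h1 : ContinuousWithinAt u (Ico 0 T) T := hucont.continuousWithinAt
    have h2 : T ∈ closure (Ico (0:ℝ) T) := by
      rw [closure_Ico (ne_of_lt hT0)]
      exact ⟨hT0.le, le_rfl⟩
    have h3 := h1.mem_closure_image h2
    have h4 : u '' Ico 0 T ⊆ Set.Ioo 0 1 := by
      rintro y ⟨s, hs, rfl⟩
      exact hpre s hs.1 hs.2
    have h5 := (closure_mono h4) h3
    rwa [closure_Ioo (by norm_num : (0:ℝ) ≠ 1)] at h5
  have hvy : v (u T) = 0 := by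
    have h2 := hTS.2
    simp only [Set.mem_Ioo, not_and_or, not_lt] at h2
    rcases h2 with h | h
    · have : u T = 0 := le_antisymm h hmem.1
      simp [hv, this]
    · have : u T = 1 := le_antisymm hmem.2 h
      simp [hv, this]
  obtain ⟨K, U, hU, hlip⟩ := hvC.contDiffAt.exists_lipschitzOnWith
  obtain ⟨ε, hε0, hball⟩ := Metric.mem_nhds_iff.mp hU
  obtain ⟨η, hη0, hη⟩ := Metric.continuousAt_iff.mp (hucont.continuousAt (x := T)) ε hε0
  set a := max 0 (T - η/2) with ha
  have ha0 : 0 ≤ a := le_max_left _ _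
  have haT : a < T := max_lt hT0 (by linarith)
  have hclose : ∀ s ∈ Icc a T, u s ∈ Metric.ball (u T) ε := by
    intro s hs
    have h1 : T - s ≤ η/2 := by
      have := hs.1
      have h2 : T - η/2 ≤ a := le_max_right _ _
      linarith
    have : dist s T < η := by
      rw [Real.dist_eq, abs_of_nonpos (by linarith [hs.2])]
      linarith
    exact hη this
  have heq := ODE_solution_unique_of_mem_Icc_left
    (v := fun _ q => v q) (s := fun _ => Metric.ball (u T) ε) (K := K)
    (fun _ _ => hlip.mono hball)
    (hucont.continuousOn (s := Icc a T))
    (fun s _ => (hu s).hasDerivWithinAt)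
    (fun s hs => hclose s (Ioc_subset_Icc_self hs))
    (continuousOn_const (c := u T))
    (fun s _ => by simpa [hvy] using (hasDerivWithinAt_const s (Iic s) (u T)))
    (fun s _ => Metric.mem_ball_self hε0)
    rfl
  have hua : u a = u T := heq (left_mem_Icc.mpr haT.le)
  exact absurd (hua ▸ hpre a ha0 haT) hTS.2


/-- Lemma 3.4: bounds on the growth factor ψ_t(x) = exp(λ∫₀ᵗ G(φ_s(x))ds) along
characteristics φ of dx/dt = -x(1-x)piF(x): there are constants 0 < M̲, M̄ < ∞
with M̲ e^{λG(1)t} φ_t(x)^{λ(G(1)-G(0))/piF(0)} ≤ ψ_t(x) ≤ M̄ e^{λG(1)t}. -/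
theorem growth_factor_bounds (G piF : ℝ → ℝ)
    (hG : ContDiff ℝ 1 G) (hpi : ContDiff ℝ 1 piF)
    (hG01 : G 0 < G 1) (hpos : ∀ s ∈ Set.Icc (0:ℝ) 1, 0 < piF s)
    (lam : ℝ) (hlam : 0 < lam)
    (φ : ℝ → ℝ → ℝ) (hφ0 : ∀ x, φ 0 x = x)
    (hφ : ∀ x ∈ Set.Ioo (0:ℝ) 1, ∀ t : ℝ,
      HasDerivAt (fun t => φ t x) (-(φ t x * (1 - φ t x) * piF (φ t x))) t) :
    ∃ Mlo Mhi : ℝ, 0 < Mlo ∧ 0 < Mhi ∧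
      ∀ x ∈ Set.Ioo (0:ℝ) 1, ∀ t ≥ (0:ℝ),
        Mlo * Real.exp (lam * G 1 * t) * (φ t x) ^ (lam * (G 1 - G 0) / piF 0)
            ≤ Real.exp (lam * ∫ s in (0:ℝ)..t, G (φ s x)) ∧
        Real.exp (lam * ∫ s in (0:ℝ)..t, G (φ s x))
            ≤ Mhi * Real.exp (lam * G 1 * t) := by
  have hGc : Continuous G := hG.continuous
  have hpic : Continuous piF := hpi.continuous
  have hpi0 : 0 < piF 0 := hpos 0 (by norm_num)
  -- minimum of piF on [0,1]
  obtain ⟨qm, hqm, hqmin⟩ := (isCompact_Icc : IsCompact (Icc (0:ℝ) 1)).exists_isMinOn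
    ⟨0, by norm_num⟩ hpic.continuousOn
  set m := piF qm with hm
  have hm0 : 0 < m := hpos qm hqm
  have hmle : ∀ q ∈ Icc (0:ℝ) 1, m ≤ piF q := fun q hq => hqmin hq
  -- the constant c
  set c : ℝ := (G 0 - G 1) / piF 0 with hc
  have hcneg : c < 0 := div_neg_of_neg_of_pos (by linarith) hpi0
  -- remainder N
  set N : ℝ → ℝ := fun q => G q - G 1 - c * ((1 - q) * piF q) with hN
  have hN0 : N 0 = 0 := by
    simp only [hN, hc]
    field_simp
    ring
  have hN1 : N 1 = 0 := by simp [hN]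
  have hNdiff : ContDiff ℝ 1 N :=
    (hG.sub contDiff_const).sub
      (contDiff_const.mul ((contDiff_const.sub contDiff_id).mul hpi))
  obtain ⟨L, hL⟩ := isCompact_Icc.exists_bound_of_continuousOn
    ((hNdiff.continuous_deriv le_rfl).continuousOn (s := Icc (0:ℝ) 1))
  have hL0 : 0 ≤ L := le_trans (norm_nonneg _) (hL 0 ⟨le_rfl, by norm_num⟩)
  have hNdiffAt : ∀ q ∈ Icc (0:ℝ) 1, DifferentiableAt ℝ N q :=
    fun q _ => (hNdiff.differentiable one_ne_zero).differentiableAt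
  have hNq : ∀ q ∈ Icc (0:ℝ) 1, |N q| ≤ L * q ∧ |N q| ≤ L * (1 - q) := by
    intro q hq
    constructor
    · have h := Convex.norm_image_sub_le_of_norm_deriv_le hNdiffAt hL (convex_Icc 0 1) 
        (⟨le_rfl, by norm_num⟩ : (0:ℝ) ∈ Icc (0:ℝ) 1) hq
      rw [hN0] at h
      simpa [Real.norm_eq_abs, abs_of_nonneg hq.1] using h
    · have h := Convex.norm_image_sub_le_of_norm_deriv_le hNdiffAt hL (convex_Icc 0 1) 
        (⟨by norm_num, le_rfl⟩ : (1:ℝ) ∈ Icc (0:ℝ) 1) hq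
      rw [hN1] at h
      have : |q - 1| = 1 - q := by rw [abs_of_nonpos (by linarith [hq.2])]; ring
      simpa [Real.norm_eq_abs, this] using h
  have hNlow : ∀ q ∈ Icc (0:ℝ) 1, -(2 * L) * (q * (1 - q)) ≤ N q := by
    intro q hq
    obtain ⟨h1, h2⟩ := hNq q hq
    rcases le_or_gt q (1/2) with h | h
    · nlinarith [abs_nonneg (N q), neg_abs_le (N q), hq.1, hq.2]
    · nlinarith [abs_nonneg (N q), neg_abs_le (N q), hq.1, hq.2]
  -- bound on G'
  obtain ⟨LG, hLG⟩ := isCompact_Icc.exists_bound_of_continuousOn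
    ((hG.continuous_deriv le_rfl).continuousOn (s := Icc (0:ℝ) 1))
  have hLG0 : 0 ≤ LG := le_trans (norm_nonneg _) (hLG 0 ⟨le_rfl, by norm_num⟩)
  have hGdiffAt : ∀ q ∈ Icc (0:ℝ) 1, DifferentiableAt ℝ G q :=
    fun q _ => (hG.differentiable one_ne_zero).differentiableAt
  have hGq : ∀ q ∈ Icc (0:ℝ) 1, |G q - G 1| ≤ LG * (1 - q) := by
    intro q hq
    have h := Convex.norm_image_sub_le_of_norm_deriv_le hGdiffAt hLG (convex_Icc 0 1)
      (⟨by norm_num, le_rfl⟩ : (1:ℝ) ∈ Icc (0:ℝ) 1) hq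
    have habs : |q - 1| = 1 - q := by rw [abs_of_nonpos (by linarith [hq.2])]; ring
    simpa [Real.norm_eq_abs, habs] using h
  -- smallness region near 0 for the upper bound
  obtain ⟨δ, hδ0, hδ⟩ := Metric.continuousAt_iff.mp (hGc.continuousAt (x := 0))
    (G 1 - G 0) (by linarith)
  set d : ℝ := δ / 2 with hd
  have hd0 : 0 < d := by positivity
  have hsmall : ∀ q : ℝ, 0 ≤ q → q ≤ d → G q ≤ G 1 := by
    intro q h0 hqd
    have : dist q 0 < δ := by
      rw [Real.dist_eq, sub_zero, abs_of_nonneg h0]; linarith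
    have := hδ this
    rw [Real.dist_eq] at this
    have := abs_lt.mp this
    linarith [this.2]
  set Cu : ℝ := LG / (d * m) with hCu
  have hCu0 : 0 ≤ Cu := by positivity
  set Cl : ℝ := 2 * L / m with hCl
  have hCl0 : 0 ≤ Cl := div_nonneg (by linarith) hm0.le
  -- pointwise upper bound
  have hup : ∀ q ∈ Icc (0:ℝ) 1, G q ≤ G 1 + Cu * (q * (1 - q) * piF q) := by
    intro q hq
    have hπ : 0 < piF q := hpos q hq
    rcases le_or_gt q d with h | h
    · have h1 := hsmall q hq.1 h
      have h2 : 0 ≤ Cu * (q * (1 - q) * piF q) := by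
        apply mul_nonneg hCu0
        apply mul_nonneg (mul_nonneg hq.1 (by linarith [hq.2])) hπ.le
      linarith
    · have h1 : G q - G 1 ≤ LG * (1 - q) := le_trans (le_abs_self _) (hGq q hq)
      have h2 : d * ((1 - q) * m) ≤ q * ((1 - q) * piF q) := by
        apply mul_le_mul h.le _ (mul_nonneg (by linarith [hq.2]) hm0.le) hq.1
        exact mul_le_mul_of_nonneg_left (hmle q hq) (by linarith [hq.2])
      have h3 : Cu * (d * ((1 - q) * m)) ≤ Cu * (q * ((1 - q) * piF q)) :=
        mul_le_mul_of_nonneg_left h2 hCu0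
      have h4 : Cu * (d * ((1 - q) * m)) = LG * (1 - q) := by
        rw [hCu]; field_simp
      calc G q ≤ G 1 + LG * (1 - q) := by linarith
        _ = G 1 + Cu * (d * ((1 - q) * m)) := by rw [h4]
        _ ≤ G 1 + Cu * (q * ((1 - q) * piF q)) := by linarith
        _ = G 1 + Cu * (q * (1 - q) * piF q) := by ring
  -- pointwise lower bound
  have hlow : ∀ q ∈ Icc (0:ℝ) 1,
      G 1 + c * ((1 - q) * piF q) - Cl * (q * (1 - q) * piF q) ≤ G q := by
    intro q hq
    have hπ : 0 < piF q := hpos q hq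
    have h1 := hNlow q hq
    have h2 : 2 * L * (q * (1 - q)) ≤ Cl * (q * (1 - q) * piF q) := by
      have h3 : m * (q * (1 - q)) ≤ piF q * (q * (1 - q)) :=
        mul_le_mul_of_nonneg_right (hmle q hq)
          (mul_nonneg hq.1 (by linarith [hq.2]))
      have h4 : Cl * (m * (q * (1 - q))) ≤ Cl * (piF q * (q * (1 - q))) :=
        mul_le_mul_of_nonneg_left h3 hCl0
      have h5 : Cl * (m * (q * (1 - q))) = 2 * L * (q * (1 - q)) := by
        rw [hCl]; field_simp
      calc 2 * L * (q * (1 - q)) = Cl * (m * (q * (1 - q))) := h5.symm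
        _ ≤ Cl * (piF q * (q * (1 - q))) := h4
        _ = Cl * (q * (1 - q) * piF q) := by ring
    have : G q = G 1 + c * ((1 - q) * piF q) + N q := by rw [hN]; ring
    linarith
  clear_value m c N d Cu Cl
  refine ⟨Real.exp (-(lam * Cl)), Real.exp (lam * Cu), Real.exp_pos _, Real.exp_pos _, ?_⟩
  intro x hx t ht
  set u : ℝ → ℝ := fun s => φ s x with hu
  have hu' : ∀ s : ℝ, HasDerivAt u (-(u s * (1 - u s) * piF (u s))) s := hφ x hx
  have hu0 : u 0 ∈ Set.Ioo (0:ℝ) 1 := by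
    show φ 0 x ∈ Set.Ioo (0:ℝ) 1
    rw [hφ0]; exact hx
  have inv : ∀ s, 0 ≤ s → u s ∈ Set.Ioo (0:ℝ) 1 := aux_stays_in_Ioo piF hpi u hu0 hu'
  have hucont : Continuous u := continuous_iff_continuousAt.mpr fun s => (hu' s).continuousAt
  have hux : u 0 = x := hφ0 x
  have hcont1 : Continuous (fun s => -(u s * (1 - u s) * piF (u s))) :=
    ((hucont.mul (continuous_const.sub hucont)).mul (hpic.comp hucont)).neg
  have hcont2 : Continuous (fun s => -((1 - u s) * piF (u s))) :=
    ((continuous_const.sub hucont).mul (hpic.comp hucont)).neg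
  -- FTC for u and log u
  have int_u' : IntervalIntegrable (fun s => -(u s * (1 - u s) * piF (u s))) MeasureTheory.volume 0 t :=
    hcont1.intervalIntegrable 0 t
  have key1 : ∫ s in (0:ℝ)..t, -(u s * (1 - u s) * piF (u s)) = u t - x := by
    rw [intervalIntegral.integral_eq_sub_of_hasDerivAt (fun s _ => hu' s) int_u', hux]
  have hlog' : ∀ s ∈ uIcc (0:ℝ) t, HasDerivAt (fun s => Real.log (u s))
      (-((1 - u s) * piF (u s))) s := by
    intro s hs
    rw [uIcc_of_le ht] at hs
    have hne : u s ≠ 0 := (inv s hs.1).1.ne'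
    have h := (hu' s).log hne
    convert h using 1
    rw [eq_div_iff hne]; ring
  have contOn_log : ContinuousOn (fun s => -((1 - u s) * piF (u s))) (uIcc (0:ℝ) t) :=
    hcont2.continuousOn
  have int_log' : IntervalIntegrable (fun s => -((1 - u s) * piF (u s)))
      MeasureTheory.volume 0 t := contOn_log.intervalIntegrable
  have key2 : ∫ s in (0:ℝ)..t, -((1 - u s) * piF (u s)) = Real.log (u t) - Real.log x := by
    rw [intervalIntegral.integral_eq_sub_of_hasDerivAt hlog' int_log', hux]
  have int_G : IntervalIntegrable (fun s => G (u s)) MeasureTheory.volume 0 t :=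
    (hGc.comp hucont).intervalIntegrable 0 t
  have hut := inv t ht
  have hxI := hx
  -- upper bound on the integral
  have Iup : ∫ s in (0:ℝ)..t, G (u s) ≤ G 1 * t + Cu := by
    have int_rhs : IntervalIntegrable (fun s => G 1 - Cu * -(u s * (1 - u s) * piF (u s)))
        MeasureTheory.volume 0 t :=
      (continuous_const.sub (continuous_const.mul hcont1)).intervalIntegrable 0 t
    have h1 : ∫ s in (0:ℝ)..t, G (u s)
        ≤ ∫ s in (0:ℝ)..t, (G 1 - Cu * -(u s * (1 - u s) * piF (u s))) := by
      apply intervalIntegral.integral_mono_on ht int_G int_rhs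
      intro s hs
      have := hup (u s) (Ioo_subset_Icc_self (inv s hs.1))
      linarith [this]
    have h2 : ∫ s in (0:ℝ)..t, (G 1 - Cu * -(u s * (1 - u s) * piF (u s)))
        = G 1 * t - Cu * (u t - x) := by
      rw [intervalIntegral.integral_sub (intervalIntegrable_const) 
        (int_u'.const_mul Cu), intervalIntegral.integral_const_mul, key1]
      simp [mul_comm]
    have h3 : Cu * (u t - x) ≥ -Cu := by
      have h5 : (-1:ℝ) ≤ u t - x := by linarith [hut.1, hxI.2]
      have := mul_le_mul_of_nonneg_left h5 hCu0
      linarith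
    linarith
  -- lower bound on the integral
  have Ilow : G 1 * t - c * Real.log (u t) - Cl ≤ ∫ s in (0:ℝ)..t, G (u s) := by
    have int_rhs : IntervalIntegrable
        (fun s => G 1 - c * -((1 - u s) * piF (u s)) + Cl * -(u s * (1 - u s) * piF (u s)))
        MeasureTheory.volume 0 t :=
      ((continuous_const.sub (continuous_const.mul hcont2)).add
        (continuous_const.mul hcont1)).intervalIntegrable 0 t
    have h1 : ∫ s in (0:ℝ)..t,
        (G 1 - c * -((1 - u s) * piF (u s)) + Cl * -(u s * (1 - u s) * piF (u s)))
        ≤ ∫ s in (0:ℝ)..t, G (u s) := by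
      apply intervalIntegral.integral_mono_on ht int_rhs int_G
      intro s hs
      have := hlow (u s) (Ioo_subset_Icc_self (inv s hs.1))
      nlinarith [this]
    have h2 : ∫ s in (0:ℝ)..t,
        (G 1 - c * -((1 - u s) * piF (u s)) + Cl * -(u s * (1 - u s) * piF (u s)))
        = G 1 * t - c * (Real.log (u t) - Real.log x) + Cl * (u t - x) := by
      rw [intervalIntegral.integral_add (intervalIntegrable_const.sub (int_log'.const_mul c))
        (int_u'.const_mul Cl),
        intervalIntegral.integral_sub intervalIntegrable_const (int_log'.const_mul c),
        intervalIntegral.integral_const_mul, intervalIntegral.integral_const_mul, key1, key2]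
      simp [mul_comm]
    have h3 : 0 ≤ c * Real.log x := by
      have hl := Real.log_nonpos hxI.1.le hxI.2.le
      have := mul_nonneg (neg_nonneg.mpr hcneg.le) (neg_nonneg.mpr hl)
      rwa [neg_mul_neg] at this
    have h4 : Cl * (u t - x) ≥ -Cl := by
      have h5 : (-1:ℝ) ≤ u t - x := by linarith [hut.1, hxI.2]
      have := mul_le_mul_of_nonneg_left h5 hCl0
      linarith
    rw [h2] at h1
    linarith
  simp only [show ∀ s, φ s x = u s from fun _ => rfl]
  clear_value u
  constructor
  · -- lower bound
    have hrpow : (u t) ^ (lam * (G 1 - G 0) / piF 0)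
        = Real.exp ((lam * (G 1 - G 0) / piF 0) * Real.log (u t)) := by
      rw [Real.rpow_def_of_pos hut.1, mul_comm]
    have hac : lam * (G 1 - G 0) / piF 0 = -(lam * c) := by
      rw [hc]; field_simp; ring
    rw [hrpow, ← Real.exp_add, ← Real.exp_add]
    apply Real.exp_le_exp.mpr
    have := mul_le_mul_of_nonneg_left Ilow hlam.le
    rw [hac]
    linarith [this]
  · -- upper bound
    rw [← Real.exp_add]
    apply Real.exp_le_exp.mpr
    have := mul_le_mul_of_nonneg_left Iup hlam.le
    linarith [this]
end
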